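/- Gradient oracles simulate Hessian-vector-product oracles for quadratic lower-level functions (core identity of Lemma 1): let g : ℝ^{d_x} × ℝ^{d_y} → ℝ be given by g(x,y) = ½ yᵀH y + xᵀJ y + bᵀy, where H ∈ ℝ^{d_y × d_y} is symmetric, J ∈ ℝ^{d_x × d_y} and b ∈ ℝ^{d_y}. Then for all x ∈ ℝ^{d_x} and y, v ∈ ℝ^{d_y}: ∇²_{yy} g(x,y) v = H v = ∇_y g(x,v) − ∇_y g(x,0), and ∇²_{xy} g(x,y) v = J v = ∇_x g(x,v). In particular, the response of the HVP oracle O^{hvp}(x,y,v) = (∇_x f(x,y), ∇_y f(x,y), ∇²_{xy} g(x,y) v, ∇²_{yy} g(x,y) v) is determined by the gradient-oracle responses of f and g at the points (x,y), (x,v) and (x,0). -/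

import Mathlib

/-!
For a symmetric `A`, the derivative of `z ↦ ½⟪z, A z⟫` at `y` is `w ↦ ⟪A y, w⟫`, so every partial
gradient of the quadratic `g` is affine in `y`: `∇_y g(x,y) = H y + Jᵀ x + b` and
`∇_x g(x,y) = J y`. Differentiating these affine maps in `y` returns their linear parts `H` and `J`,
which are also recovered from two gradient evaluations.
-/

noncomputable section
open scoped RealInnerProductSpace

/-- `ℝⁿ` with the Euclidean structure. -/
abbrev EV (n : ℕ) : Type := EuclideanSpace ℝ (Fin n)

/-- Partial gradient of a function of two vector variables, with respect to the
first variable. -/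
noncomputable def gradx {dx dy : ℕ} (g : EV dx → EV dy → ℝ) (x : EV dx) (y : EV dy) : EV dx :=
  gradient (fun x' => g x' y) x

/-- Partial gradient of a function of two vector variables, with respect to the
second variable. -/
noncomputable def grady {dx dy : ℕ} (g : EV dx → EV dy → ℝ) (x : EV dx) (y : EV dy) : EV dy :=
  gradient (fun y' => g x y') y

section Gradient

variable {E : Type*} [NormedAddCommGroup E] [InnerProductSpace ℝ E] [FiniteDimensional ℝ E]

theorem hasGradientAt_inner_add_const (c : E) (K : ℝ) (y : E) :
    HasGradientAt (fun z => ⟪c, z⟫ + K) c y := by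
  rw [hasGradientAt_iff_hasFDerivAt]
  exact ((innerSL ℝ c).hasFDerivAt.add_const K).congr_fderiv rfl

theorem LinearMap.IsSymmetric.hasGradientAt_half_inner_self_add {A : E →ₗ[ℝ] E}
    (hA : A.IsSymmetric) (c : E) (K : ℝ) (y : E) :
    HasGradientAt (fun z => (1 / 2) * ⟪z, A z⟫ + ⟪c, z⟫ + K) (A y + c) y := by
  let A' : E →L[ℝ] E := A.toContinuousLinearMap
  have hquad : HasFDerivAt (fun z => ⟪z, A' z⟫)
      ((fderivInnerCLM ℝ (y, A' y)).comp ((ContinuousLinearMap.id ℝ E).prod A')) y :=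
    (hasFDerivAt_id y).inner ℝ A'.hasFDerivAt
  rw [hasGradientAt_iff_hasFDerivAt]
  refine (((hquad.const_mul (1 / 2)).add (innerSL ℝ c).hasFDerivAt).add_const K).congr_fderiv ?_
  ext w
  -- symmetry of `A` merges the two terms `⟪w, A y⟫` and `⟪y, A w⟫` of the product rule
  simp only [coe_toContinuousLinearMap', _root_.add_apply, _root_.smul_apply,
    ContinuousLinearMap.comp_apply, ContinuousLinearMap.prod_apply, ContinuousLinearMap.id_apply,
    fderivInnerCLM_apply, smul_eq_mul, coe_innerSL_apply, InnerProductSpace.toDual_apply_apply,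
    inner_add_left, A']
  rw [← hA y w, real_inner_comm w]
  ring

end Gradient

section QuadraticLowerLevel

variable {dx dy : ℕ}

def quadraticLowerLevel (H : Matrix (Fin dy) (Fin dy) ℝ) (J : Matrix (Fin dx) (Fin dy) ℝ)
    (b : EV dy) (x : EV dx) (y : EV dy) : ℝ :=
  (1 / 2) * ⟪y, Matrix.toEuclideanLin H y⟫ + ⟪x, Matrix.toEuclideanLin J y⟫ + ⟪b, y⟫

theorem grady_quadraticLowerLevel {H : Matrix (Fin dy) (Fin dy) ℝ} (hH : H.IsSymm)
    (J : Matrix (Fin dx) (Fin dy) ℝ) (b : EV dy) (x : EV dx) (y : EV dy) :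
    grady (quadraticLowerLevel H J b) x y
      = Matrix.toEuclideanLin H y + (Matrix.toEuclideanLin J.transpose x + b) := by
  have hHerm : H.IsHermitian := by
    rwa [Matrix.IsHermitian, Matrix.conjTranspose_eq_transpose_of_trivial]
  have hJ : Matrix.toEuclideanLin J.transpose = (Matrix.toEuclideanLin J).adjoint := by
    rw [← Matrix.conjTranspose_eq_transpose_of_trivial,
      Matrix.toEuclideanLin_conjTranspose_eq_adjoint]
  have hfun : (fun y' => quadraticLowerLevel H J b x y')
      = fun y' => (1 / 2) * ⟪y', Matrix.toEuclideanLin H y'⟫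
          + ⟪Matrix.toEuclideanLin J.transpose x + b, y'⟫ + 0 := by
    funext y'
    rw [quadraticLowerLevel, inner_add_left, hJ, LinearMap.adjoint_inner_left]
    ring
  rw [grady, hfun]
  exact (Matrix.isSymmetric_toEuclideanLin_iff.mpr hHerm).hasGradientAt_half_inner_self_add _ _ y
    |>.gradient

theorem gradx_quadraticLowerLevel (H : Matrix (Fin dy) (Fin dy) ℝ)
    (J : Matrix (Fin dx) (Fin dy) ℝ) (b : EV dy) (x : EV dx) (y : EV dy) :
    gradx (quadraticLowerLevel H J b) x y = Matrix.toEuclideanLin J y := by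
  have hfun : (fun x' => quadraticLowerLevel H J b x' y)
      = fun x' => ⟪Matrix.toEuclideanLin J y, x'⟫
          + ((1 / 2) * ⟪y, Matrix.toEuclideanLin H y⟫ + ⟪b, y⟫) := by
    funext x'
    rw [quadraticLowerLevel, real_inner_comm _ x']
    ring
  rw [gradx, hfun]
  exact (hasGradientAt_inner_add_const _ _ x).gradient

end QuadraticLowerLevel

theorem fderiv_linearMap_add_const {E F : Type*} [NormedAddCommGroup E] [NormedSpace ℝ E]
    [FiniteDimensional ℝ E] [NormedAddCommGroup F] [NormedSpace ℝ F]
    (A : E →ₗ[ℝ] F) (c : F) (y v : E) :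
    fderiv ℝ (fun z => A z + c) y v = A v := by
  have hA : HasFDerivAt (fun z => A z + c) A.toContinuousLinearMap y :=
    A.toContinuousLinearMap.hasFDerivAt.add_const c
  rw [hA.fderiv, LinearMap.coe_toContinuousLinearMap']

/-- `∇²_{yy} g(x,·)` is realized as the Fréchet derivative of `y ↦ ∇_y g(x,y)`, and
`∇²_{xy} g(x,·)` as the Fréchet derivative of `y ↦ ∇_x g(x,y)`. -/
theorem grad_oracle_simulates_hvp_for_quadratic_lower_level
    (dx dy : ℕ) (H : Matrix (Fin dy) (Fin dy) ℝ) (hH : H.IsSymm)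
    (J : Matrix (Fin dx) (Fin dy) ℝ) (b : EV dy)
    (g : EV dx → EV dy → ℝ)
    (hg : ∀ x y, g x y = (1/2) * ⟪y, Matrix.toEuclideanLin H y⟫
        + ⟪x, Matrix.toEuclideanLin J y⟫ + ⟪b, y⟫) :
    ∀ (x : EV dx) (y v : EV dy),
      (fderiv ℝ (fun y' => grady g x y') y) v = Matrix.toEuclideanLin H v ∧
      Matrix.toEuclideanLin H v = grady g x v - grady g x 0 ∧
      (fderiv ℝ (fun y' => gradx g x y') y) v = Matrix.toEuclideanLin J v ∧
      Matrix.toEuclideanLin J v = gradx g x v := by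
  obtain rfl : g = quadraticLowerLevel H J b := funext₂ hg
  intro x y v
  refine ⟨?_, ?_, ?_, (gradx_quadraticLowerLevel H J b x v).symm⟩
  · simp_rw [grady_quadraticLowerLevel hH]
    exact fderiv_linearMap_add_const _ _ y v
  · rw [grady_quadraticLowerLevel hH, grady_quadraticLowerLevel hH, map_zero, zero_add,
      add_sub_cancel_right]
  · simp_rw [gradx_quadraticLowerLevel]
    simpa using fderiv_linearMap_add_const (Matrix.toEuclideanLin J) 0 y v
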